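/- arXiv:1712.02911 — 7 statements merged into one kernel-verified Lean document; each statement's English description precedes it below -/
import Mathlib

section
/- Let v be a positive natural number and let k, λ, μ, ν be real numbers with 0 < k < v. Let B₁, B₂, B₃ ∈ Matrix (Fin v) (Fin v) ℝ be matrices all of whose entries are 0 or 1, satisfying Bₕ * Bₕᵀ = Bₕᵀ * Bₕ = (k − λ)•1 + λ•J for each h ∈ {1,2,3} (where J is the all-ones matrix), together with the three linking equations B₃ * B₁ = ν•J + (μ − ν)•B₂ᵀ, B₁ * B₂ = ν•J + (μ − ν)•B₃ᵀ, and B₂ * B₃ = ν•J + (μ − ν)•B₁ᵀ. Then (μ − ν)² = k − λ, v·ν = k·(k − (μ − ν)), and ν·(k + (μ − ν)) = λ·k. -/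
/-!
Entrywise `B i j ^ 2 = B i j`, so the diagonal of `B Bᵀ` makes every row and column sum `k`:
`B J = Bᵀ J = k J`. Evaluating `B Bᵀ J` then gives `λ (v - 1) = k (k - 1)`, which with `0 < k < v`
forces `v ≥ 2` and `k ≠ λ`. Multiplying `B₁ B₂ = ν J + (μ - ν) B₃ᵀ` on the right by `J` gives
`k² = v ν + (μ - ν) k`, and computing the Gram matrix `(B₁ B₂)(B₁ B₂)ᵀ` from both sides gives two
expressions `a • 1 + b • J`, whose coefficients agree since `1` and `J` are linearly independent
for `v ≥ 2`. Cancelling `k - λ` and `k` yields the three identities.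
-/

open Matrix

/-- The all-ones `v × v` real matrix. -/
def J (v : ℕ) : Matrix (Fin v) (Fin v) ℝ := Matrix.of fun _ _ => 1

section AllOnes

variable {v : ℕ}

@[simp]
lemma J_apply (i j : Fin v) : J v i j = 1 := rfl

@[simp]
lemma transpose_J : (J v)ᵀ = J v := rfl

lemma J_mul_J : J v * J v = (v : ℝ) • J v := by
  ext i j
  simp [mul_apply]

lemma smul_J_injective (hv : 0 < v) {a b : ℝ} (h : a • J v = b • J v) : a = b := by
  simpa using congrFun (congrFun h ⟨0, hv⟩) ⟨0, hv⟩

lemma smul_one_add_smul_J_injective (hv : 1 < v) {a b c d : ℝ}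
    (h : a • (1 : Matrix (Fin v) (Fin v) ℝ) + b • J v = c • 1 + d • J v) : a = c ∧ b = d := by
  have hoff := congrFun (congrFun h ⟨0, by omega⟩) ⟨1, hv⟩
  have hdiag := congrFun (congrFun h ⟨0, by omega⟩) ⟨0, by omega⟩
  simp only [Matrix.add_apply, Matrix.smul_apply, one_apply, Fin.mk.injEq, zero_ne_one,
    ↓reduceIte, smul_eq_mul, mul_zero, J_apply, mul_one, zero_add] at hoff hdiag
  exact ⟨by linarith, hoff⟩

end AllOnes

section Design

variable {v : ℕ} {k lam : ℝ} {B : Matrix (Fin v) (Fin v) ℝ}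

lemma mul_J_of_mul_transpose (h01 : ∀ a b, B a b = 0 ∨ B a b = 1)
    (hB : B * Bᵀ = (k - lam) • (1 : Matrix (Fin v) (Fin v) ℝ) + lam • J v) :
    B * J v = k • J v := by
  ext i j
  have hdiag := congrFun (congrFun hB i) i
  simp only [mul_apply, transpose_apply, Matrix.add_apply, Matrix.smul_apply, one_apply_eq,
    J_apply, smul_eq_mul, mul_one, sub_add_cancel] at hdiag
  have hsq : ∀ l, B i l * B i l = B i l := fun l => by rcases h01 i l with h | h <;> simp [h]
  simp only [mul_apply, J_apply, mul_one, Matrix.smul_apply, smul_eq_mul]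
  simpa only [hsq] using hdiag

lemma transpose_mul_J_of_transpose_mul (h01 : ∀ a b, B a b = 0 ∨ B a b = 1)
    (hB : Bᵀ * B = (k - lam) • (1 : Matrix (Fin v) (Fin v) ℝ) + lam • J v) :
    Bᵀ * J v = k • J v :=
  mul_J_of_mul_transpose (fun a b => h01 b a) (by rwa [transpose_transpose])

lemma J_mul_transpose_of_mul_J (h : B * J v = k • J v) : J v * Bᵀ = k • J v := by
  simpa using congrArg transpose h

lemma J_mul_of_transpose_mul_J (h : Bᵀ * J v = k • J v) : J v * B = k • J v := by
  simpa using congrArg transpose h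

lemma lam_mul_sub_one (hv : 0 < v)
    (hB : B * Bᵀ = (k - lam) • (1 : Matrix (Fin v) (Fin v) ℝ) + lam • J v)
    (hrow : B * J v = k • J v) (hcol : Bᵀ * J v = k • J v) :
    lam * (v - 1) = k * (k - 1) := by
  have h : (k * k) • J v = (k - lam + lam * v) • J v := by
    calc (k * k) • J v = B * (Bᵀ * J v) := by rw [hcol, Matrix.mul_smul, hrow, smul_smul]
      _ = (k - lam + lam * v) • J v := by
        rw [← Matrix.mul_assoc, hB, add_mul, smul_mul, smul_mul, Matrix.one_mul, J_mul_J,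
          smul_smul, ← add_smul]
  linear_combination (smul_J_injective hv h).symm

lemma mul_mul_transpose_mul (A : Matrix (Fin v) (Fin v) ℝ)
    (hA : A * Aᵀ = (k - lam) • (1 : Matrix (Fin v) (Fin v) ℝ) + lam • J v)
    (hB : B * Bᵀ = (k - lam) • (1 : Matrix (Fin v) (Fin v) ℝ) + lam • J v)
    (hAJ : A * J v = k • J v) :
    A * B * (A * B)ᵀ = ((k - lam) * (k - lam)) • 1 + ((k - lam) * lam + lam * (k * k)) • J v := by
  rw [transpose_mul, Matrix.mul_assoc, ← Matrix.mul_assoc B, hB, add_mul, mul_add, smul_mul,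
    smul_mul, Matrix.one_mul, Matrix.mul_smul, Matrix.mul_smul, hA, ← Matrix.mul_assoc, hAJ, smul_mul,
    J_mul_transpose_of_mul_J hAJ]
  module

lemma smul_J_add_smul_transpose_mul_transpose (a t : ℝ)
    (hB : Bᵀ * B = (k - lam) • (1 : Matrix (Fin v) (Fin v) ℝ) + lam • J v)
    (hcol : Bᵀ * J v = k • J v) :
    (a • J v + t • Bᵀ) * (a • J v + t • Bᵀ)ᵀ
      = (t * t * (k - lam)) • 1 + (a * a * v + 2 * (a * (t * k)) + t * t * lam) • J v := by
  rw [transpose_add, transpose_smul, transpose_smul, transpose_J, transpose_transpose, add_mul,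
    mul_add, mul_add, smul_mul, Matrix.mul_smul, J_mul_J, smul_mul, Matrix.mul_smul,
    J_mul_of_transpose_mul_J hcol, smul_mul, Matrix.mul_smul, hcol, smul_mul, Matrix.mul_smul, hB]
  module

lemma smul_J_add_smul_transpose_mul_J (a t : ℝ) (hcol : Bᵀ * J v = k • J v) :
    (a • J v + t • Bᵀ) * J v = (a * v + t * k) • J v := by
  rw [add_mul, smul_mul, smul_mul, J_mul_J, hcol]
  module

end Design

theorem stmt_0_general (v : ℕ) (k lam mu nu : ℝ)
    (hk0 : 0 < k) (hkv : k < (v : ℝ))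
    (B₁ B₂ B₃ : Matrix (Fin v) (Fin v) ℝ)
    (h01 : ∀ B ∈ [B₁, B₂, B₃], ∀ a b, B a b = 0 ∨ B a b = 1)
    (hdes : ∀ B ∈ [B₁, B₂, B₃],
      B * Bᵀ = (k - lam) • (1 : Matrix (Fin v) (Fin v) ℝ) + lam • J v ∧
      Bᵀ * B = (k - lam) • (1 : Matrix (Fin v) (Fin v) ℝ) + lam • J v)
    (h12 : B₁ * B₂ = nu • J v + (mu - nu) • B₃ᵀ) :
    (mu - nu) ^ 2 = k - lam ∧
    (v : ℝ) * nu = k * (k - (mu - nu)) ∧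
    nu * (k + (mu - nu)) = lam * k := by
  obtain ⟨hB₁, hB₁t⟩ := hdes B₁ (by simp)
  obtain ⟨hB₂, -⟩ := hdes B₂ (by simp)
  obtain ⟨-, hB₃t⟩ := hdes B₃ (by simp)
  have hrow₁ := mul_J_of_mul_transpose (h01 B₁ (by simp)) hB₁
  have hcol₁ := transpose_mul_J_of_transpose_mul (h01 B₁ (by simp)) hB₁t
  have hrow₂ := mul_J_of_mul_transpose (h01 B₂ (by simp)) hB₂
  have hcol₃ := transpose_mul_J_of_transpose_mul (h01 B₃ (by simp)) hB₃t
  have hv : 0 < v := by exact_mod_cast hk0.trans hkv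
  have hcount := lam_mul_sub_one hv hB₁ hrow₁ hcol₁
  have hv₁ : 1 < v := by
    by_contra! h
    obtain rfl : v = 1 := by omega
    push_cast at hcount hkv
    nlinarith
  have hkl : k - lam ≠ 0 := fun h => by nlinarith [sub_eq_zero.mp h]
  have hk : k * k = nu * v + (mu - nu) * k := smul_J_injective hv <| by
    rw [← smul_J_add_smul_transpose_mul_J nu (mu - nu) hcol₃, ← h12, Matrix.mul_assoc, hrow₂,
      Matrix.mul_smul, hrow₁, smul_smul]
  have hgram := mul_mul_transpose_mul B₁ hB₁ hB₂ hrow₁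
  rw [h12, smul_J_add_smul_transpose_mul_transpose nu (mu - nu) hB₃t hcol₃] at hgram
  obtain ⟨hdiag, hoff⟩ := smul_one_add_smul_J_injective hv₁ hgram
  have ht : (mu - nu) ^ 2 = k - lam := by
    rw [sq]
    exact mul_right_cancel₀ hkl hdiag
  refine ⟨ht, by linear_combination -hk, mul_left_cancel₀ hk0.ne' ?_⟩
  linear_combination hoff - lam * ht + nu * hk

theorem stmt_0 (v : ℕ) (hv : 0 < v) (k lam mu nu : ℝ)
    (hk0 : 0 < k) (hkv : k < (v : ℝ))
    (B₁ B₂ B₃ : Matrix (Fin v) (Fin v) ℝ)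
    (h01 : ∀ B ∈ [B₁, B₂, B₃], ∀ a b, B a b = 0 ∨ B a b = 1)
    (hdes : ∀ B ∈ [B₁, B₂, B₃],
      B * Bᵀ = (k - lam) • (1 : Matrix (Fin v) (Fin v) ℝ) + lam • J v ∧
      Bᵀ * B = (k - lam) • (1 : Matrix (Fin v) (Fin v) ℝ) + lam • J v)
    (h31 : B₃ * B₁ = nu • J v + (mu - nu) • B₂ᵀ)
    (h12 : B₁ * B₂ = nu • J v + (mu - nu) • B₃ᵀ)
    (h23 : B₂ * B₃ = nu • J v + (mu - nu) • B₁ᵀ) :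
    (mu - nu) ^ 2 = k - lam ∧
    (v : ℝ) * nu = k * (k - (mu - nu)) ∧
    nu * (k + (mu - nu)) = lam * k :=
  stmt_0_general v k lam mu nu hk0 hkv B₁ B₂ B₃ h01 hdes h12
end

section
/- Let v, k, λ, s be positive integers with s² = k − λ, k·(k−1) = λ·(v−1), and 1 < k < v−1, and suppose that v divides k·(k+s) or v divides k·(k−s). Then: (i) v does not divide both k·(k+s) and k·(k−s); (ii) gcd(k, v) > 1; and (iii) gcd(s, v) > 1. -/
/-!
Write `s² = k - λ`; the design equation becomes `(k + s)(k - s) = λ v`. Hence `v` divides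
`k (k ± s)` exactly when it divides `s (k ± s)`, while `v` divides neither `k + s` (it would force
`λ ≥ k - s`, i.e. `s ≤ 1`, and `s = 1` gives `k = v - 1`) nor `k - s` (as `0 < k - s < v`).
So `v` shares a factor with `k` and with `s`. If `v` divided both `k (k ± s)` it would divide their
difference `2 s²`, and `0 < 2 s² < 2 v` forces `v = 2 s²`; then `λ² = s² - s⁴ ≤ 0`.
-/

namespace SymmetricDesign

variable {v k lam s : ℤ}

theorem add_mul_sub_eq (hs2 : s ^ 2 = k - lam) (hdes : k * (k - 1) = lam * (v - 1)) :
    (k + s) * (k - s) = lam * v := by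
  linear_combination hdes - hs2

theorem two_le_of_sq_eq (hs : 0 < s) (hs2 : s ^ 2 = k - lam)
    (hdes : k * (k - 1) = lam * (v - 1)) (hk1 : 1 < k) (hkv : k < v - 1) : 2 ≤ s := by
  by_contra! h
  obtain rfl : s = 1 := by omega
  have hk : k = v - 1 := by
    refine mul_left_cancel₀ (by omega : k - 1 ≠ 0) ?_
    linear_combination hdes + (v - 1) * hs2
  omega

theorem not_dvd_add (hlam : 0 < lam) (hs : 2 ≤ s) (hs2 : s ^ 2 = k - lam)
    (hdes : k * (k - 1) = lam * (v - 1)) (hv : 0 < v) : ¬ v ∣ k + s := by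
  rintro ⟨t, ht⟩
  have hlam_eq : t * (k - s) = lam := by
    refine mul_left_cancel₀ hv.ne' ?_
    linear_combination add_mul_sub_eq hs2 hdes - (k - s) * ht
  have hsk : s < k := by nlinarith
  have htpos : 0 < t := by
    by_contra! h
    nlinarith
  -- `t ≥ 1` gives `λ ≥ k - s`, i.e. `s² ≤ s`
  nlinarith

theorem dvd_mul_add_iff (hs2 : s ^ 2 = k - lam) (hdes : k * (k - 1) = lam * (v - 1)) :
    v ∣ k * (k + s) ↔ v ∣ s * (k + s) := by
  have h : k * (k + s) = s * (k + s) + lam * v := by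
    linear_combination add_mul_sub_eq hs2 hdes
  rw [h, dvd_add_left (dvd_mul_left v lam)]

theorem dvd_mul_sub_iff (hs2 : s ^ 2 = k - lam) (hdes : k * (k - 1) = lam * (v - 1)) :
    v ∣ k * (k - s) ↔ v ∣ s * (k - s) := by
  have h : k * (k - s) = lam * v - s * (k - s) := by
    linear_combination add_mul_sub_eq hs2 hdes
  rw [h, dvd_sub_right (dvd_mul_left v lam)]

theorem not_dvd_both (hlam : 0 < lam) (hs : 0 < s) (hs2 : s ^ 2 = k - lam)
    (hdes : k * (k - 1) = lam * (v - 1)) (hkv : k < v) :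
    ¬ (v ∣ k * (k + s) ∧ v ∣ k * (k - s)) := by
  rintro ⟨hplus, hminus⟩
  have hdvd : v ∣ 2 * s ^ 2 := by
    have h := dvd_sub ((dvd_mul_add_iff hs2 hdes).1 hplus) ((dvd_mul_sub_iff hs2 hdes).1 hminus)
    rwa [show s * (k + s) - s * (k - s) = 2 * s ^ 2 by ring] at h
  have hsv : s ^ 2 < v := by linarith
  obtain ⟨c, hc⟩ := hdvd
  obtain rfl : c = 1 := by
    have : 0 < c := by nlinarith
    have : c < 2 := by nlinarith
    omega
  obtain rfl : v = 2 * s ^ 2 := by linarith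
  obtain rfl : lam = k - s ^ 2 := by linarith
  have hlam_sq : (k - s ^ 2) ^ 2 = s ^ 2 - s ^ 4 := by linear_combination hdes
  nlinarith

end SymmetricDesign

theorem Int.one_lt_gcd_of_dvd_mul {a b v : ℤ} (hv : v ≠ 0) (h : v ∣ a * b) (hb : ¬ v ∣ b) :
    1 < Int.gcd a v := by
  have hpos : 0 < Int.gcd a v := Int.gcd_pos_of_ne_zero_right a hv
  have hne : Int.gcd a v ≠ 1 := fun h1 =>
    hb (Int.dvd_of_dvd_mul_right_of_gcd_one h (by rwa [Int.gcd_comm]))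
  omega

open SymmetricDesign in
theorem stmt_2_general (v k lam s : ℤ) (hlam : 0 < lam) (hs : 0 < s)
    (hs2 : s ^ 2 = k - lam) (hdes : k * (k - 1) = lam * (v - 1))
    (hk1 : 1 < k) (hkv : k < v - 1)
    (hdvd : v ∣ k * (k + s) ∨ v ∣ k * (k - s)) :
    ¬(v ∣ k * (k + s) ∧ v ∣ k * (k - s)) ∧
    1 < Int.gcd k v ∧
    1 < Int.gcd s v := by
  have hv : 0 < v := by omega
  have hs_two := two_le_of_sq_eq hs hs2 hdes hk1 hkv
  have hsk : s < k := by nlinarith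
  have hadd := not_dvd_add hlam hs_two hs2 hdes hv
  have hsub : ¬ v ∣ k - s := fun h => absurd (Int.le_of_dvd (by omega) h) (by omega)
  refine ⟨not_dvd_both hlam hs hs2 hdes (by omega), ?_, ?_⟩
  · rcases hdvd with h | h
    exacts [Int.one_lt_gcd_of_dvd_mul hv.ne' h hadd, Int.one_lt_gcd_of_dvd_mul hv.ne' h hsub]
  · rcases hdvd with h | h
    · exact Int.one_lt_gcd_of_dvd_mul hv.ne' ((dvd_mul_add_iff hs2 hdes).1 h) hadd
    · exact Int.one_lt_gcd_of_dvd_mul hv.ne' ((dvd_mul_sub_iff hs2 hdes).1 h) hsub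

theorem stmt_2 (v k lam s : ℤ) (hv : 0 < v) (hk : 0 < k) (hlam : 0 < lam) (hs : 0 < s)
    (hs2 : s ^ 2 = k - lam) (hdes : k * (k - 1) = lam * (v - 1))
    (hk1 : 1 < k) (hkv : k < v - 1)
    (hdvd : v ∣ k * (k + s) ∨ v ∣ k * (k - s)) :
    ¬(v ∣ k * (k + s) ∧ v ∣ k * (k - s)) ∧
    1 < Int.gcd k v ∧
    1 < Int.gcd s v :=
  stmt_2_general v k lam s hlam hs hs2 hdes hk1 hkv hdvd
end

section
/- Let v ≥ 2 be a natural number and let a : Fin v → EuclideanSpace ℝ (Fin (v−1)) be a regular simplex. Then for all x, y ∈ EuclideanSpace ℝ (Fin (v−1)), ∑ i, ⟪a i, x⟫ * ⟪a i, y⟫ = (v/(v−1)) * ⟪x, y⟫. -/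
open RealInnerProductSpace

/-- A regular simplex in `ℝ^(v-1)`: a family of `v` unit vectors with pairwise
inner products `-1/(v-1)`. -/
def IsRegularSimplex (v : ℕ) (a : Fin v → EuclideanSpace ℝ (Fin (v - 1))) : Prop :=
  (∀ i, ‖a i‖ = 1) ∧
  ∀ i j, i ≠ j → ⟪a i, a j⟫ = -1 / ((v : ℝ) - 1)

/-! Lifting the vertices `a i` of a regular simplex in `ℝ^(v-1)` to `(a i, 1/√(v-1))` in
`ℝ^(v-1) × ℝ` makes them pairwise orthogonal, of common squared norm `v/(v-1)`. These `v`
vectors of a `v`-dimensional space are thus a rescaled orthonormal basis, and Parseval's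
identity for `(x, 0)` and `(y, 0)` is the claim. -/

theorem WithLp.finrank_prod (p : ENNReal) (K V W : Type*) [Field K]
    [AddCommGroup V] [Module K V] [FiniteDimensional K V]
    [AddCommGroup W] [Module K W] [FiniteDimensional K W] :
    Module.finrank K (WithLp p (V × W)) = Module.finrank K V + Module.finrank K W := by
  rw [(WithLp.linearEquiv p K (V × W)).finrank_eq, Module.finrank_prod]

section Parseval

variable {ι E : Type*} [Fintype ι]
  [NormedAddCommGroup E] [InnerProductSpace ℝ E] [FiniteDimensional ℝ E]

theorem sum_inner_mul_inner_of_pairwise_inner_eq_zero {f : ι → E} {c : ℝ} (hc : 0 < c)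
    (hf_self : ∀ i, ⟪f i, f i⟫ = c) (hf_orth : Pairwise fun i j ↦ ⟪f i, f j⟫ = 0)
    (hcard : Fintype.card ι = Module.finrank ℝ E) (x y : E) :
    ∑ i, ⟪x, f i⟫ * ⟪f i, y⟫ = c * ⟪x, y⟫ := by
  set e : ι → E := fun i ↦ (√c)⁻¹ • f i
  have he : Orthonormal ℝ e := by
    refine ⟨fun i ↦ ?_, fun i j hij ↦ ?_⟩
    · have hfi : ‖f i‖ = √c := by rw [norm_eq_sqrt_real_inner, hf_self]
      rw [norm_smul, hfi, norm_inv, Real.norm_of_nonneg (Real.sqrt_nonneg c),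
        inv_mul_cancel₀ (Real.sqrt_pos.2 hc).ne']
    · simp only [e, real_inner_smul_left, real_inner_smul_right, hf_orth hij, mul_zero]
  let b : OrthonormalBasis ι ℝ E :=
    .mk he (he.linearIndependent.span_eq_top_of_card_eq_finrank' hcard).ge
  have hparseval := b.sum_inner_mul_inner x y
  simp only [b, OrthonormalBasis.coe_mk, e, real_inner_smul_left, real_inner_smul_right]
    at hparseval
  have hscale (p q : ℝ) : (√c)⁻¹ * p * ((√c)⁻¹ * q) = c⁻¹ * (p * q) := by
    rw [← Real.sqrt_inv, mul_mul_mul_comm, Real.mul_self_sqrt (inv_nonneg.2 hc.le)]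
  simp only [hscale, ← Finset.mul_sum] at hparseval
  rw [← hparseval, mul_inv_cancel_left₀ hc.ne']

theorem sum_inner_mul_inner_of_lift_orthogonal {a : ι → E} {r c : ℝ} (hc : 0 < c)
    (ha_self : ∀ i, ⟪a i, a i⟫ + r ^ 2 = c)
    (ha_orth : Pairwise fun i j ↦ ⟪a i, a j⟫ + r ^ 2 = 0)
    (hcard : Fintype.card ι = Module.finrank ℝ E + 1) (x y : E) :
    ∑ i, ⟪a i, x⟫ * ⟪a i, y⟫ = c * ⟪x, y⟫ := by
  have hinner (u w : E) (s t : ℝ) :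
      ⟪WithLp.toLp 2 (u, s), WithLp.toLp 2 (w, t)⟫ = ⟪u, w⟫ + s * t := by
    simp [mul_comm]
  have hcard' : Fintype.card ι = Module.finrank ℝ (WithLp 2 (E × ℝ)) := by
    rw [hcard, WithLp.finrank_prod, Module.finrank_self]
  have hparseval := sum_inner_mul_inner_of_pairwise_inner_eq_zero
    (f := fun i ↦ WithLp.toLp 2 (a i, r)) hc
    (fun i ↦ by rw [hinner, ← sq, ha_self])
    (fun i j hij ↦ by dsimp only; rw [hinner, ← sq, ha_orth hij])
    hcard' (WithLp.toLp 2 (x, 0)) (WithLp.toLp 2 (y, 0))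
  simpa only [hinner, mul_zero, zero_mul, add_zero, real_inner_comm x] using hparseval

end Parseval

theorem stmt_4 (v : ℕ) (hv : 2 ≤ v) (a : Fin v → EuclideanSpace ℝ (Fin (v - 1)))
    (ha : IsRegularSimplex v a) (x y : EuclideanSpace ℝ (Fin (v - 1))) :
    ∑ i, ⟪a i, x⟫ * ⟪a i, y⟫ = ((v : ℝ) / ((v : ℝ) - 1)) * ⟪x, y⟫ := by
  obtain ⟨ha_norm, ha_inner⟩ := ha
  have hv1 : (0 : ℝ) < (v : ℝ) - 1 := by
    have : (2 : ℝ) ≤ v := by exact_mod_cast hv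
    linarith
  have hr : √((v : ℝ) - 1)⁻¹ ^ 2 = ((v : ℝ) - 1)⁻¹ := Real.sq_sqrt (inv_nonneg.2 hv1.le)
  refine sum_inner_mul_inner_of_lift_orthogonal (r := √((v : ℝ) - 1)⁻¹) (by positivity)
    (fun i ↦ ?_) (fun i j hij ↦ ?_) ?_ x y
  · rw [real_inner_self_eq_norm_sq, ha_norm, hr]
    field_simp
    ring
  · dsimp only
    rw [ha_inner i j hij, hr]
    ring
  · simp only [Fintype.card_fin, finrank_euclideanSpace]
    omega
end

section
/- Let v ≥ 2 and let a, b : Fin v → EuclideanSpace ℝ (Fin (v−1)) be regular simplices that are linked with inner products γ, ζ (γ ≠ ζ). For each j define the block B j := {i | ⟪a i, b j⟫ = γ}. Then for every j, (|B j| : ℝ) = v·ζ/(ζ−γ), and for all s ≠ t, (|B s ∩ B t| : ℝ) = (v·ζ² − v/(v−1)²)/(ζ−γ)². In particular all blocks have the same size and any two distinct blocks meet in the same number of points, so (Fin v, {B j}) is a symmetric 2-design. -/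
/-!
The vertices of a regular simplex sum to zero, and in dimension `v - 1` they form a tight frame:
`∑ k, ⟪a k, x⟫ ⟪a k, y⟫ = v/(v-1) ⟪x, y⟫`. Since `⟪a i, b j⟫ - ζ` equals `γ - ζ` on the block `B j`
and `0` off it, summing it over `i` gives `(γ - ζ) |B j| = -vζ`, and summing the product of two
such columns gives `(γ - ζ)² |B s ∩ B t| = v/(v-1) ⟪b s, b t⟫ + vζ² = vζ² - v/(v-1)²`.
-/

open RealInnerProductSpace

/-- Two regular simplices are linked with inner products `γ, ζ` if every inner product
between a vector of one and a vector of the other equals `γ` or `ζ`. -/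
def AreLinked (v : ℕ) (a b : Fin v → EuclideanSpace ℝ (Fin (v - 1))) (γ ζ : ℝ) : Prop :=
  ∀ i j, ⟪a i, b j⟫ = γ ∨ ⟪a i, b j⟫ = ζ

open Finset Module

section Counting

variable {ι : Type*} [Fintype ι]

theorem natCast_ncard_setOf_eq_sum_ite (p : ι → Prop) [DecidablePred p] :
    (({i | p i} : Set ι).ncard : ℝ) = ∑ i, if p i then 1 else 0 := by
  rw [Set.ncard_eq_toFinset_card', Set.toFinset_ofPred, natCast_card_filter]

theorem sub_eq_mul_ite_of_eq_or_eq {x γ ζ : ℝ} (hx : x = γ ∨ x = ζ) :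
    x - ζ = (γ - ζ) * if x = γ then 1 else 0 := by
  rcases hx with rfl | rfl <;> split_ifs <;> simp_all

theorem sum_sub_eq_mul_ncard {f : ι → ℝ} {γ ζ : ℝ} (hf : ∀ i, f i = γ ∨ f i = ζ) :
    ∑ i, (f i - ζ) = (γ - ζ) * {i | f i = γ}.ncard := by
  classical
  simp_rw [natCast_ncard_setOf_eq_sum_ite, mul_sum, sub_eq_mul_ite_of_eq_or_eq (hf _)]

theorem sum_sub_mul_sub_eq_mul_ncard_inter {f g : ι → ℝ} {γ ζ : ℝ}
    (hf : ∀ i, f i = γ ∨ f i = ζ) (hg : ∀ i, g i = γ ∨ g i = ζ) :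
    ∑ i, (f i - ζ) * (g i - ζ) = (γ - ζ) ^ 2 * ({i | f i = γ} ∩ {i | g i = γ}).ncard := by
  classical
  simp_rw [← Set.ofPred_and, natCast_ncard_setOf_eq_sum_ite, mul_sum,
    sub_eq_mul_ite_of_eq_or_eq (hf _), sub_eq_mul_ite_of_eq_or_eq (hg _)]
  refine sum_congr rfl fun i _ => ?_
  split_ifs <;> simp_all [sq]

end Counting

variable {ι E : Type*} [Fintype ι] [NormedAddCommGroup E] [InnerProductSpace ℝ E]

structure IsRegularSimplexFamily (a : ι → E) : Prop where
  two_le_card : 2 ≤ Fintype.card ι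
  norm_eq_one : ∀ i, ‖a i‖ = 1
  inner_eq_of_ne : Pairwise fun i j => ⟪a i, a j⟫ = -1 / ((Fintype.card ι : ℝ) - 1)

theorem IsRegularSimplex.isRegularSimplexFamily {v : ℕ} (hv : 2 ≤ v)
    {a : Fin v → EuclideanSpace ℝ (Fin (v - 1))} (ha : IsRegularSimplex v a) :
    IsRegularSimplexFamily a :=
  ⟨by simpa using hv, ha.1, fun i j hij => by simpa using ha.2 i j hij⟩

namespace IsRegularSimplexFamily

variable {a : ι → E}

theorem card_sub_one_ne_zero (ha : IsRegularSimplexFamily a) : (Fintype.card ι : ℝ) - 1 ≠ 0 := by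
  have : (2 : ℝ) ≤ Fintype.card ι := mod_cast ha.two_le_card
  linarith

theorem inner_eq [DecidableEq ι] (ha : IsRegularSimplexFamily a) (i j : ι) :
    ⟪a i, a j⟫ = (Fintype.card ι : ℝ) / (Fintype.card ι - 1) * (if i = j then 1 else 0)
      - 1 / (Fintype.card ι - 1) := by
  have hm := ha.card_sub_one_ne_zero
  obtain rfl | hij := eq_or_ne i j
  · rw [real_inner_self_eq_norm_sq, ha.norm_eq_one, if_pos rfl]
    field_simp
  · rw [ha.inner_eq_of_ne hij, if_neg hij]
    ring

theorem sum_eq_zero (ha : IsRegularSimplexFamily a) : ∑ i, a i = 0 := by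
  classical
  rw [← inner_self_eq_zero (𝕜 := ℝ), sum_inner]
  simp_rw [inner_sum, ha.inner_eq]
  simp [sum_sub_distrib, div_eq_mul_inv]

theorem sum_inner_smul_self (ha : IsRegularSimplexFamily a) (j : ι) :
    ∑ k, ⟪a k, a j⟫ • a k = ((Fintype.card ι : ℝ) / (Fintype.card ι - 1)) • a j := by
  classical
  simp only [ha.inner_eq, sub_smul, sum_sub_distrib, ← smul_sum, ha.sum_eq_zero, smul_zero,
    sub_zero, mul_smul, ite_smul, one_smul, zero_smul, smul_ite]
  simp

theorem eq_of_sum_smul_eq_zero (ha : IsRegularSimplexFamily a) {c : ι → ℝ}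
    (hc : ∑ k, c k • a k = 0) (i j : ι) : c i = c j := by
  classical
  have key : ∀ i, (Fintype.card ι : ℝ) * c i = ∑ k, c k := by
    intro i
    have h := congrArg (⟪a i, ·⟫) hc
    simp_rw [inner_sum, inner_zero_right, real_inner_smul_right, ha.inner_eq] at h
    simp only [mul_ite, mul_one, mul_zero, one_div, mul_sub, sum_sub_distrib, sum_ite_eq,
      mem_univ, ↓reduceIte, ← sum_mul] at h
    field_simp [ha.card_sub_one_ne_zero] at h
    linear_combination h
  have hm : (Fintype.card ι : ℝ) ≠ 0 := by have := ha.two_le_card; positivity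
  exact mul_left_cancel₀ hm ((key i).trans (key j).symm)

theorem span_eq_top (ha : IsRegularSimplexFamily a) (hE : finrank ℝ E + 1 = Fintype.card ι) :
    Submodule.span ℝ (Set.range a) = ⊤ := by
  classical
  have h2 := ha.two_le_card
  -- The only linear relations among the vertices have constant coefficients, so dropping one
  -- vertex leaves `finrank ℝ E` linearly independent vectors.
  obtain ⟨i₀⟩ : Nonempty ι := Fintype.card_pos_iff.mp (by omega)
  have hli : LinearIndepOn ℝ a {k | k ≠ i₀} := by
    rw [linearIndepOn_iff]
    intro l hl hl0
    have hl₀ : l i₀ = 0 := Finsupp.notMem_support_iff.mp fun h => hl h rfl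
    rw [Finsupp.linearCombination_apply, Finsupp.sum_fintype _ _ (by simp)] at hl0
    ext j
    rw [ha.eq_of_sum_smul_eq_zero hl0 j i₀, hl₀, Finsupp.coe_zero, Pi.zero_apply]
  have hcard : Fintype.card {k | k ≠ i₀} = finrank ℝ E := by
    rw [Set.card_ne_eq]
    omega
  have : Nonempty {k | k ≠ i₀} := Fintype.card_pos_iff.mp (by omega)
  rw [eq_top_iff, ← hli.linearIndependent.span_eq_top_of_card_eq_finrank hcard]
  exact Submodule.span_mono (Set.range_comp_subset_range _ _)

theorem sum_inner_smul (ha : IsRegularSimplexFamily a) (hE : finrank ℝ E + 1 = Fintype.card ι)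
    (x : E) : ∑ k, ⟪a k, x⟫ • a k = ((Fintype.card ι : ℝ) / (Fintype.card ι - 1)) • x := by
  have hx : x ∈ Submodule.span ℝ (Set.range a) := ha.span_eq_top hE ▸ Submodule.mem_top
  induction hx using Submodule.span_induction with
  | mem y hy =>
    obtain ⟨j, rfl⟩ := hy
    exact ha.sum_inner_smul_self j
  | zero => simp
  | add y z _ _ hy hz => simp [inner_add_right, add_smul, sum_add_distrib, hy, hz]
  | smul r y _ hy =>
    simp_rw [real_inner_smul_right, mul_smul, ← smul_sum, hy]
    exact smul_comm r _ y

theorem sum_inner_mul_inner (ha : IsRegularSimplexFamily a)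
    (hE : finrank ℝ E + 1 = Fintype.card ι) (x y : E) :
    ∑ k, ⟪a k, x⟫ * ⟪a k, y⟫ = (Fintype.card ι : ℝ) / (Fintype.card ι - 1) * ⟪x, y⟫ := by
  simp_rw [← real_inner_smul_left, ← ha.sum_inner_smul hE, sum_inner]

end IsRegularSimplexFamily

theorem stmt_5 (v : ℕ) (hv : 2 ≤ v) (γ ζ : ℝ) (hγζ : γ ≠ ζ)
    (a b : Fin v → EuclideanSpace ℝ (Fin (v - 1)))
    (ha : IsRegularSimplex v a) (hb : IsRegularSimplex v b)
    (hlink : AreLinked v a b γ ζ)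
    (B : Fin v → Set (Fin v)) (hB : ∀ j, B j = {i | ⟪a i, b j⟫ = γ}) :
    (∀ j, ((B j).ncard : ℝ) = (v : ℝ) * ζ / (ζ - γ)) ∧
    (∀ s t : Fin v, s ≠ t →
      ((B s ∩ B t).ncard : ℝ) =
        ((v : ℝ) * ζ ^ 2 - (v : ℝ) / ((v : ℝ) - 1) ^ 2) / (ζ - γ) ^ 2) := by
  obtain rfl : B = fun j => {i | ⟪a i, b j⟫ = γ} := funext hB
  have ha' := ha.isRegularSimplexFamily hv
  have hdim : finrank ℝ (EuclideanSpace ℝ (Fin (v - 1))) + 1 = Fintype.card (Fin v) := by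
    simp only [finrank_euclideanSpace_fin, Fintype.card_fin]
    omega
  have hζγ : ζ - γ ≠ 0 := sub_ne_zero.mpr hγζ.symm
  have hcol (j : Fin v) : ∑ i, ⟪a i, b j⟫ = 0 := by
    rw [← sum_inner, ha'.sum_eq_zero, inner_zero_left]
  refine ⟨fun j => ?_, fun s t hst => ?_⟩
  · have h := sum_sub_eq_mul_ncard (hlink · j)
    rw [sum_sub_distrib, hcol, sum_const, card_univ, Fintype.card_fin, nsmul_eq_mul] at h
    rw [eq_div_iff hζγ]
    linear_combination h
  · have h := sum_sub_mul_sub_eq_mul_ncard_inter (hlink · s) (hlink · t)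
    have hframe := ha'.sum_inner_mul_inner hdim (b s) (b t)
    rw [hb.2 s t hst, Fintype.card_fin] at hframe
    simp only [sub_mul, mul_sub, sum_sub_distrib, ← sum_mul, ← mul_sum, hcol, hframe, sum_const,
      card_univ, Fintype.card_fin, nsmul_eq_mul] at h
    rw [eq_div_iff (pow_ne_zero 2 hζγ)]
    field_simp at h ⊢
    linear_combination -h
end

section
/- Let v ≥ 2 and let a, b, c : Fin v → EuclideanSpace ℝ (Fin (v−1)) be regular simplices such that a is linked with b and a is linked with c, in both cases with the same inner products γ, ζ (γ ≠ ζ). Define B j := {i | ⟪a i, b j⟫ = γ} and C m := {i | ⟪a i, c m⟫ = γ}. Then for all j and m, (|B j ∩ C m| : ℝ) = (1/(γ−ζ)²)·(v·ζ² + (v/(v−1))·⟪b j, c m⟫). In particular, if b and c are also linked with inner products γ, ζ, then |B j ∩ C m| takes only two values μ and ν, determined solely by whether ⟪b j, c m⟫ equals γ or ζ. -/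
/-! The vectors of a regular simplex form a tight frame: they sum to zero and
`∑ i, ⟪a i, x⟫ * ⟪a i, y⟫ = v / (v - 1) * ⟪x, y⟫`. Since `⟪a i, b j⟫` only takes the values
`γ, ζ`, the indicator of `i ∈ B j` is `(⟪a i, b j⟫ - ζ) / (γ - ζ)`, so `|B j ∩ C m|` is a sum of
products of two such affine expressions, which the two frame identities evaluate. -/

open RealInnerProductSpace

open Finset Module

section SimplexGram

variable {E ι : Type*} [NormedAddCommGroup E] [InnerProductSpace ℝ E] [Fintype ι]
  [DecidableEq ι] {a : ι → E}

theorem inner_sum_smul_of_gram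
    (hgram : ∀ i j, ⟪a i, a j⟫ = if i = j then 1 else -1 / ((Fintype.card ι : ℝ) - 1))
    (g : ι → ℝ) (u : ι) :
    ⟪a u, ∑ i, g i • a i⟫ = g u + (g u - ∑ i, g i) / ((Fintype.card ι : ℝ) - 1) := by
  set n : ℝ := (Fintype.card ι : ℝ)
  have hterm : ∀ i, g i * (if u = i then 1 else -1 / (n - 1)) =
      g i * (-1 / (n - 1)) + if u = i then g u + g u / (n - 1) else 0 := by
    intro i
    split_ifs with h
    · subst h; ring
    · ring
  simp only [inner_sum, real_inner_smul_right, hgram, hterm, sum_add_distrib, sum_ite_eq,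
    mem_univ, if_true, ← sum_mul]
  ring

theorem sum_eq_zero_of_gram (hn : 2 ≤ Fintype.card ι)
    (hgram : ∀ i j, ⟪a i, a j⟫ = if i = j then 1 else -1 / ((Fintype.card ι : ℝ) - 1)) :
    ∑ i, a i = 0 := by
  have hn' : (Fintype.card ι : ℝ) - 1 ≠ 0 := by
    have : (2 : ℝ) ≤ Fintype.card ι := by exact_mod_cast hn
    linarith
  have hu : ∀ u, ⟪a u, ∑ i, a i⟫ = 0 := by
    intro u
    have h := inner_sum_smul_of_gram hgram (fun _ => 1) u
    simp only [one_smul, sum_const, card_univ, nsmul_eq_mul, mul_one] at h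
    rw [h]
    field_simp
    ring
  rw [← inner_self_eq_zero (𝕜 := ℝ), sum_inner]
  exact sum_eq_zero fun u _ => hu u

theorem eq_sum_div_card_of_sum_smul_eq_zero_of_gram (hn : 2 ≤ Fintype.card ι)
    (hgram : ∀ i j, ⟪a i, a j⟫ = if i = j then 1 else -1 / ((Fintype.card ι : ℝ) - 1))
    {g : ι → ℝ} (hg : ∑ i, g i • a i = 0) (u : ι) :
    g u = (∑ i, g i) / Fintype.card ι := by
  have hn' : (2 : ℝ) ≤ Fintype.card ι := by exact_mod_cast hn
  have h := inner_sum_smul_of_gram hgram g u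
  rw [hg, inner_zero_right] at h
  field_simp [show (Fintype.card ι : ℝ) - 1 ≠ 0 by linarith] at h
  field_simp
  linarith

theorem linearIndepOn_compl_singleton_of_gram (hn : 2 ≤ Fintype.card ι)
    (hgram : ∀ i j, ⟪a i, a j⟫ = if i = j then 1 else -1 / ((Fintype.card ι : ℝ) - 1))
    (i₀ : ι) : LinearIndepOn ℝ a {i₀}ᶜ := by
  rw [linearIndepOn_iff]
  intro l hl hl0
  rw [Finsupp.linearCombination_apply, Finsupp.sum_fintype _ _ (by simp)] at hl0
  have hl₀ : l i₀ = 0 := (Finsupp.mem_supported' ℝ l).mp hl i₀ (by simp)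
  ext i
  rw [eq_sum_div_card_of_sum_smul_eq_zero_of_gram hn hgram hl0 i,
    ← eq_sum_div_card_of_sum_smul_eq_zero_of_gram hn hgram hl0 i₀, hl₀, Finsupp.coe_zero,
    Pi.zero_apply]

theorem span_range_eq_top_of_gram (hn : 2 ≤ Fintype.card ι)
    (hgram : ∀ i j, ⟪a i, a j⟫ = if i = j then 1 else -1 / ((Fintype.card ι : ℝ) - 1))
    (hdim : finrank ℝ E = Fintype.card ι - 1) :
    Submodule.span ℝ (Set.range a) = ⊤ := by
  obtain ⟨i₀⟩ : Nonempty ι := Fintype.card_pos_iff.mp (by omega)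
  have : FiniteDimensional ℝ E := .of_finrank_pos (by omega)
  have htop := (linearIndepOn_compl_singleton_of_gram hn hgram i₀).linearIndependent
    |>.span_eq_top_of_card_eq_finrank' (by simp [filter_ne', hdim])
  exact top_le_iff.mp (htop ▸ Submodule.span_mono (Set.range_comp_subset_range _ _))

theorem sum_inner_mul_inner_of_gram (hn : 2 ≤ Fintype.card ι)
    (hgram : ∀ i j, ⟪a i, a j⟫ = if i = j then 1 else -1 / ((Fintype.card ι : ℝ) - 1))
    (hspan : Submodule.span ℝ (Set.range a) = ⊤) (x y : E) :
    ∑ i, ⟪a i, x⟫ * ⟪a i, y⟫ =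
      (Fintype.card ι : ℝ) / ((Fintype.card ι : ℝ) - 1) * ⟪x, y⟫ := by
  set c : ℝ := (Fintype.card ι : ℝ) / ((Fintype.card ι : ℝ) - 1) with hc
  have hn' : (Fintype.card ι : ℝ) - 1 ≠ 0 := by
    have : (2 : ℝ) ≤ Fintype.card ι := by exact_mod_cast hn
    linarith
  have hsum : ∑ i, ⟪a i, x⟫ = 0 := by
    rw [← sum_inner, sum_eq_zero_of_gram hn hgram, inner_zero_left]
  set z := ∑ i, ⟪a i, x⟫ • a i - c • x
  have hz : ∀ u, ⟪a u, z⟫ = 0 := by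
    intro u
    rw [inner_sub_right, inner_sum_smul_of_gram hgram, hsum, real_inner_smul_right,
      real_inner_comm x, hc]
    field_simp
    ring
  have hz0 : z = 0 := by
    rw [← Submodule.span_singleton_eq_bot (R := ℝ), ← Submodule.orthogonal_eq_top_iff,
      eq_top_iff, ← hspan, Submodule.span_le]
    rintro _ ⟨u, rfl⟩
    exact (Submodule.mem_orthogonal_singleton_iff_inner_left).mpr (hz u)
  calc ∑ i, ⟪a i, x⟫ * ⟪a i, y⟫ = ⟪∑ i, ⟪a i, x⟫ • a i, y⟫ := by
        simp only [sum_inner, real_inner_smul_left]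
    _ = c * ⟪x, y⟫ := by rw [sub_eq_zero.mp hz0, real_inner_smul_left]

end SimplexGram

namespace IsRegularSimplex

variable {v : ℕ} {a : Fin v → EuclideanSpace ℝ (Fin (v - 1))}

theorem inner_eq_ite (ha : IsRegularSimplex v a) (i j : Fin v) :
    ⟪a i, a j⟫ = if i = j then 1 else -1 / ((Fintype.card (Fin v) : ℝ) - 1) := by
  split_ifs with h
  · rw [h, real_inner_self_eq_norm_sq, ha.1 j, one_pow]
  · rw [Fintype.card_fin, ha.2 i j h]

theorem sum_inner_eq_zero (hv : 2 ≤ v) (ha : IsRegularSimplex v a)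
    (x : EuclideanSpace ℝ (Fin (v - 1))) : ∑ i, ⟪a i, x⟫ = 0 := by
  rw [← sum_inner, sum_eq_zero_of_gram (by simpa using hv) ha.inner_eq_ite, inner_zero_left]

theorem sum_inner_mul_inner (hv : 2 ≤ v) (ha : IsRegularSimplex v a)
    (x y : EuclideanSpace ℝ (Fin (v - 1))) :
    ∑ i, ⟪a i, x⟫ * ⟪a i, y⟫ = (v : ℝ) / ((v : ℝ) - 1) * ⟪x, y⟫ := by
  have hv' : 2 ≤ Fintype.card (Fin v) := by simpa using hv
  have hspan := span_range_eq_top_of_gram hv' ha.inner_eq_ite (by simp)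
  simpa using sum_inner_mul_inner_of_gram hv' ha.inner_eq_ite hspan x y

end IsRegularSimplex

theorem card_filter_and_eq_sum_mul_div {ι : Type*} [Fintype ι] {γ ζ : ℝ} (hγζ : γ ≠ ζ)
    {s t : ι → ℝ} (hs : ∀ i, s i = γ ∨ s i = ζ) (ht : ∀ i, t i = γ ∨ t i = ζ) :
    (#{i | s i = γ ∧ t i = γ} : ℝ) = (∑ i, (s i - ζ) * (t i - ζ)) / (γ - ζ) ^ 2 := by
  have hd : γ - ζ ≠ 0 := sub_ne_zero.mpr hγζ
  rw [natCast_card_filter, sum_div]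
  refine sum_congr rfl fun i _ => ?_
  rcases hs i with hsi | hsi <;> rcases ht i with hti | hti <;>
    simp [hsi, hti, hγζ.symm, ← sq, hd]

theorem stmt_6_general (v : ℕ) (hv : 2 ≤ v) (γ ζ : ℝ) (hγζ : γ ≠ ζ)
    (a b c : Fin v → EuclideanSpace ℝ (Fin (v - 1)))
    (ha : IsRegularSimplex v a)
    (hab : AreLinked v a b γ ζ) (hac : AreLinked v a c γ ζ)
    (B C : Fin v → Set (Fin v))
    (hB : ∀ j, B j = {i | ⟪a i, b j⟫ = γ})
    (hC : ∀ m, C m = {i | ⟪a i, c m⟫ = γ}) :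
    (∀ j m, ((B j ∩ C m).ncard : ℝ) =
      (1 / (γ - ζ) ^ 2) * ((v : ℝ) * ζ ^ 2 + ((v : ℝ) / ((v : ℝ) - 1)) * ⟪b j, c m⟫)) ∧
    (AreLinked v b c γ ζ →
      ∃ μ ν : ℕ, ∀ j m,
        (⟪b j, c m⟫ = γ → (B j ∩ C m).ncard = μ) ∧
        (⟪b j, c m⟫ = ζ → (B j ∩ C m).ncard = ν)) := by
  set F : ℝ → ℝ := fun t => (1 / (γ - ζ) ^ 2) * ((v : ℝ) * ζ ^ 2 + ((v : ℝ) / ((v : ℝ) - 1)) * t)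
  have hcard : ∀ j m, ((B j ∩ C m).ncard : ℝ) = F ⟪b j, c m⟫ := by
    intro j m
    have hset : B j ∩ C m = ↑({i | ⟪a i, b j⟫ = γ ∧ ⟪a i, c m⟫ = γ} : Finset (Fin v)) := by
      ext
      simp [hB, hC]
    rw [hset, Set.ncard_coe_finset, card_filter_and_eq_sum_mul_div hγζ (hab · j) (hac · m)]
    simp only [sub_mul, mul_sub, sum_sub_distrib, ← sum_mul, ← mul_sum,
      ha.sum_inner_eq_zero hv, ha.sum_inner_mul_inner hv, sum_const, card_univ,
      Fintype.card_fin, nsmul_eq_mul, F]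
    ring
  refine ⟨hcard, fun _ => ⟨⌊F γ⌋₊, ⌊F ζ⌋₊, fun j m => ⟨fun h => ?_, fun h => ?_⟩⟩⟩ <;>
    rw [← h, ← hcard, Nat.floor_natCast]

theorem stmt_6 (v : ℕ) (hv : 2 ≤ v) (γ ζ : ℝ) (hγζ : γ ≠ ζ)
    (a b c : Fin v → EuclideanSpace ℝ (Fin (v - 1)))
    (ha : IsRegularSimplex v a) (hb : IsRegularSimplex v b) (hc : IsRegularSimplex v c)
    (hab : AreLinked v a b γ ζ) (hac : AreLinked v a c γ ζ)
    (B C : Fin v → Set (Fin v))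
    (hB : ∀ j, B j = {i | ⟪a i, b j⟫ = γ})
    (hC : ∀ m, C m = {i | ⟪a i, c m⟫ = γ}) :
    (∀ j m, ((B j ∩ C m).ncard : ℝ) =
      (1 / (γ - ζ) ^ 2) * ((v : ℝ) * ζ ^ 2 + ((v : ℝ) / ((v : ℝ) - 1)) * ⟪b j, c m⟫)) ∧
    (AreLinked v b c γ ζ →
      ∃ μ ν : ℕ, ∀ j m,
        (⟪b j, c m⟫ = γ → (B j ∩ C m).ncard = μ) ∧
        (⟪b j, c m⟫ = ζ → (B j ∩ C m).ncard = ν)) :=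
  stmt_6_general v hv γ ζ hγζ a b c ha hab hac B C hB hC
end

section
/- Let v ≥ 2 and let a, b : Fin v → EuclideanSpace ℝ (Fin (v−1)) be regular simplices that are linked with inner products γ, ζ (γ ≠ ζ). Then γ·ζ = −1/(v−1), and for every j, writing k_j := |{i | ⟪a i, b j⟫ = γ}|, one has ζ²·(v−1)·(v−k_j) = k_j. -/
open RealInnerProductSpace

/-! A regular simplex `a` sums to zero, and its only linear relations are the constant ones, so
it spans the `(v - 1)`-dimensional space and is a tight frame:
`∑ i, ⟪a i, x⟫ ^ 2 = v / (v - 1) * ‖x‖ ^ 2`. For `x = b j`, with `k` of the inner products equal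
to `γ` and `v - k` equal to `ζ`, this gives the moment equations `k γ + (v - k) ζ = 0` and
`k γ ^ 2 + (v - k) ζ ^ 2 = v / (v - 1)`; eliminating `γ` yields both identities. -/

open Module

section RegularFamily

variable {E : Type*} [NormedAddCommGroup E] [InnerProductSpace ℝ E] {v : ℕ} {a : Fin v → E}

theorem inner_sum_smul_of_regular (hv : 2 ≤ v) (hnorm : ∀ i, ‖a i‖ = 1)
    (hinner : ∀ i j, i ≠ j → ⟪a i, a j⟫ = -1 / ((v : ℝ) - 1)) (g : Fin v → ℝ) (i : Fin v) :
    ⟪a i, ∑ j, g j • a j⟫ = (v * g i - ∑ j, g j) / ((v : ℝ) - 1) := by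
  have hv1 : (v : ℝ) - 1 ≠ 0 := sub_ne_zero.2 (Nat.cast_ne_one.2 (by omega))
  have hoff : ∑ j ∈ Finset.univ.erase i, g j * ⟪a i, a j⟫
      = (∑ j, g j - g i) * (-1 / ((v : ℝ) - 1)) := by
    rw [Finset.sum_congr rfl fun j hj => by rw [hinner i j (Finset.ne_of_mem_erase hj).symm],
      ← Finset.sum_mul, Finset.sum_erase_eq_sub (Finset.mem_univ i)]
  simp only [inner_sum, real_inner_smul_right]
  rw [← Finset.add_sum_erase _ _ (Finset.mem_univ i), hoff, real_inner_self_eq_norm_sq, hnorm]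
  field_simp
  ring

theorem sum_eq_zero_of_regular (hv : 2 ≤ v) (hnorm : ∀ i, ‖a i‖ = 1)
    (hinner : ∀ i j, i ≠ j → ⟪a i, a j⟫ = -1 / ((v : ℝ) - 1)) : ∑ i, a i = 0 := by
  have h : ∀ i, ⟪a i, ∑ j, a j⟫ = 0 := fun i => by
    simpa using inner_sum_smul_of_regular hv hnorm hinner 1 i
  rw [← inner_self_eq_zero (𝕜 := ℝ), sum_inner]
  simp [h]

theorem mul_eq_sum_of_sum_smul_eq_zero_of_regular (hv : 2 ≤ v) (hnorm : ∀ i, ‖a i‖ = 1)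
    (hinner : ∀ i j, i ≠ j → ⟪a i, a j⟫ = -1 / ((v : ℝ) - 1)) {g : Fin v → ℝ}
    (hg : ∑ j, g j • a j = 0) (i : Fin v) : v * g i = ∑ j, g j := by
  have h := inner_sum_smul_of_regular hv hnorm hinner g i
  rw [hg, inner_zero_right, eq_comm, div_eq_zero_iff, sub_eq_zero] at h
  exact h.resolve_right (sub_ne_zero.2 (Nat.cast_ne_one.2 (by omega)))

theorem span_range_eq_top_of_regular [FiniteDimensional ℝ E] (hv : 2 ≤ v)
    (hnorm : ∀ i, ‖a i‖ = 1) (hinner : ∀ i j, i ≠ j → ⟪a i, a j⟫ = -1 / ((v : ℝ) - 1))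
    (hdim : finrank ℝ E = v - 1) : Submodule.span ℝ (Set.range a) = ⊤ := by
  set L := Fintype.linearCombination ℝ a
  have hker : LinearMap.ker L ≤ ℝ ∙ (fun _ => (1 : ℝ)) := by
    intro g hg
    rw [LinearMap.mem_ker, Fintype.linearCombination_apply] at hg
    refine Submodule.mem_span_singleton.2 ⟨(∑ j, g j) / v, funext fun i => ?_⟩
    have hv0 : (v : ℝ) ≠ 0 := Nat.cast_ne_zero.2 (by omega)
    rw [Pi.smul_apply, smul_eq_mul, mul_one,
      ← mul_eq_sum_of_sum_smul_eq_zero_of_regular hv hnorm hinner hg i, mul_div_cancel_left₀ _ hv0]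
  have hker_le : finrank ℝ (LinearMap.ker L) ≤ 1 :=
    (Submodule.finrank_mono hker).trans ((finrank_span_le_card _).trans (by simp))
  have hrank := L.finrank_range_add_finrank_ker
  rw [finrank_fin_fun, Fintype.range_linearCombination] at hrank
  exact Submodule.eq_top_of_finrank_eq ((Submodule.finrank_le _).antisymm (by omega))

theorem sum_inner_sq_of_regular_of_mem_span (hv : 2 ≤ v) (hnorm : ∀ i, ‖a i‖ = 1)
    (hinner : ∀ i j, i ≠ j → ⟪a i, a j⟫ = -1 / ((v : ℝ) - 1)) {x : E}
    (hx : x ∈ Submodule.span ℝ (Set.range a)) :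
    ∑ i, ⟪a i, x⟫ ^ 2 = v / ((v : ℝ) - 1) * ‖x‖ ^ 2 := by
  obtain ⟨g, rfl⟩ := (Submodule.mem_span_range_iff_exists_fun ℝ).1 hx
  set x := ∑ j, g j • a j
  have hcoord (i : Fin v) : ⟪a i, x⟫ = v / ((v : ℝ) - 1) * g i - (∑ j, g j) / ((v : ℝ) - 1) := by
    rw [inner_sum_smul_of_regular hv hnorm hinner]; ring
  have hsum : ∑ i, ⟪a i, x⟫ = 0 := by
    rw [← sum_inner, sum_eq_zero_of_regular hv hnorm hinner, inner_zero_left]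
  have hnorm_x : ‖x‖ ^ 2 = ∑ i, g i * ⟪a i, x⟫ := by
    rw [← real_inner_self_eq_norm_sq, sum_inner]
    simp only [real_inner_smul_left]
  calc ∑ i, ⟪a i, x⟫ ^ 2
      = ∑ i, (v / ((v : ℝ) - 1) * (g i * ⟪a i, x⟫) - (∑ j, g j) / ((v : ℝ) - 1) * ⟪a i, x⟫) :=
        Finset.sum_congr rfl fun i _ => by rw [sq, hcoord]; ring
    _ = v / ((v : ℝ) - 1) * ‖x‖ ^ 2 := by
        rw [Finset.sum_sub_distrib, ← Finset.mul_sum, ← Finset.mul_sum, hsum, hnorm_x]; ring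

end RegularFamily

theorem sum_comp_eq_of_forall_eq_or_eq {ι α : Type*} [Fintype ι] {f : ι → α} {γ ζ : α}
    (hf : ∀ i, f i = γ ∨ f i = ζ) (φ : α → ℝ) :
    ∑ i, φ (f i) = {i | f i = γ}.ncard * φ γ + (Fintype.card ι - {i | f i = γ}.ncard) * φ ζ := by
  classical
  have hφ (i : ι) : φ (f i) = if f i = γ then φ γ else φ ζ := by
    split_ifs with h
    · rw [h]
    · rw [(hf i).resolve_left h]
  rw [Finset.sum_congr rfl fun i _ => hφ i, Finset.sum_ite, Finset.sum_const, Finset.sum_const,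
    Set.ncard_eq_toFinset_card', Set.toFinset_ofPred, nsmul_eq_mul, nsmul_eq_mul,
    ← Finset.card_univ,
    ← Finset.card_filter_add_card_filter_not (s := Finset.univ) (fun i => f i = γ)]
  push_cast
  ring

theorem sq_mul_sub_eq_of_moments {v k γ ζ : ℝ} (hv : 1 < v) (h₁ : k * γ + (v - k) * ζ = 0)
    (h₂ : k * γ ^ 2 + (v - k) * ζ ^ 2 = v / (v - 1)) : ζ ^ 2 * (v - 1) * (v - k) = k := by
  have hv1 : v - 1 ≠ 0 := by linarith
  rw [eq_div_iff hv1] at h₂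
  have : v * (ζ ^ 2 * (v - 1) * (v - k)) = v * k := by
    linear_combination k * h₂ - ((v - 1) * (k * γ - (v - k) * ζ)) * h₁
  exact mul_left_cancel₀ (by linarith) this

theorem mul_eq_of_moments {v k γ ζ : ℝ} (hv : 1 < v) (h₁ : k * γ + (v - k) * ζ = 0)
    (h₂ : k * γ ^ 2 + (v - k) * ζ ^ 2 = v / (v - 1)) : γ * ζ = -1 / (v - 1) := by
  have hv1 : v - 1 ≠ 0 := by linarith
  have hk := sq_mul_sub_eq_of_moments hv h₁ h₂
  have hk0 : k ≠ 0 := by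
    rintro rfl
    have hζ : ζ = 0 := by nlinarith
    subst hζ
    rw [eq_div_iff hv1] at h₂
    linarith
  rw [eq_div_iff hv1]
  refine mul_left_cancel₀ hk0 ?_
  linear_combination (v - 1) * ζ * h₁ - hk

theorem stmt_7_general (v : ℕ) (hv : 2 ≤ v) (γ ζ : ℝ)
    (a b : Fin v → EuclideanSpace ℝ (Fin (v - 1)))
    (ha : IsRegularSimplex v a) (hb : IsRegularSimplex v b)
    (hlink : AreLinked v a b γ ζ) :
    γ * ζ = -1 / ((v : ℝ) - 1) ∧
    ∀ j, ζ ^ 2 * ((v : ℝ) - 1) * ((v : ℝ) - ({i | ⟪a i, b j⟫ = γ}.ncard : ℝ)) =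
      ({i | ⟪a i, b j⟫ = γ}.ncard : ℝ) := by
  have hv' : (1 : ℝ) < v := by exact_mod_cast hv
  have hspan := span_range_eq_top_of_regular hv ha.1 ha.2 (by simp)
  have hmoments (j : Fin v) :
      let k : ℝ := {i | ⟪a i, b j⟫ = γ}.ncard
      k * γ + (v - k) * ζ = 0 ∧ k * γ ^ 2 + (v - k) * ζ ^ 2 = v / ((v : ℝ) - 1) := by
    have h₁ := sum_comp_eq_of_forall_eq_or_eq (hlink · j) id
    have h₂ := sum_comp_eq_of_forall_eq_or_eq (hlink · j) (· ^ 2)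
    rw [Fintype.card_fin] at h₁ h₂
    simp only [id] at h₁
    rw [← sum_inner, sum_eq_zero_of_regular hv ha.1 ha.2, inner_zero_left] at h₁
    rw [sum_inner_sq_of_regular_of_mem_span hv ha.1 ha.2 (hspan ▸ Submodule.mem_top), hb.1 j,
      one_pow, mul_one] at h₂
    exact ⟨h₁.symm, h₂.symm⟩
  exact ⟨mul_eq_of_moments hv' (hmoments ⟨0, by omega⟩).1 (hmoments ⟨0, by omega⟩).2,
    fun j => sq_mul_sub_eq_of_moments hv' (hmoments j).1 (hmoments j).2⟩

theorem stmt_7 (v : ℕ) (hv : 2 ≤ v) (γ ζ : ℝ) (hγζ : γ ≠ ζ)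
    (a b : Fin v → EuclideanSpace ℝ (Fin (v - 1)))
    (ha : IsRegularSimplex v a) (hb : IsRegularSimplex v b)
    (hlink : AreLinked v a b γ ζ) :
    γ * ζ = -1 / ((v : ℝ) - 1) ∧
    ∀ j, ζ ^ 2 * ((v : ℝ) - 1) * ((v : ℝ) - ({i | ⟪a i, b j⟫ = γ}.ncard : ℝ)) =
      ({i | ⟪a i, b j⟫ = γ}.ncard : ℝ) :=
  stmt_7_general v hv γ ζ a b ha hb hlink
end

section
/- (Beth–Wocjan construction) Let n ≥ 1 and N ≥ 2 be natural numbers. Suppose there exists a regular Hadamard matrix of order n, and an orthogonal array O : Fin (n²) → Fin N → Fin n, meaning that for all distinct i, j ∈ Fin N and every pair (x, y) ∈ Fin n × Fin n there is exactly one row r ∈ Fin (n²) with O r i = x and O r j = y. Then there exists a family H' : Fin (N−1) → Matrix (Fin (n²)) (Fin (n²)) ℝ such that each H' i is a regular Hadamard matrix of order n² and, for all i ≠ j, H' i and H' j are unbiased. -/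
/-!
Each column `i` of the orthogonal array partitions the `n²` rows into `n` blocks of size `n`,
and blocks from two different columns meet in exactly one row. Writing the rows of `H` on every
block of column `i` (the positions in a block are read off from another column) gives a matrix
`Bᵢ` with `Bᵢ Bᵢᵀ = Bᵢᵀ Bᵢ = n • 1`, and for `i ≠ j` every entry of `Bᵢ Bⱼᵀ` is `±1`.
Fixing a reference column `0`, the matrices `Mᵢ = Bᵢ B₀ᵀ` (`i ≠ 0`) are Hadamard of order `n²`,
`Mᵢ Mⱼᵀ = n • Bᵢ Bⱼᵀ` makes them pairwise unbiased, and since the row sums, hence also the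
column sums, of `H` are constant, so are the row sums of `Mᵢ`.
-/

open Matrix

/-- A linked system of symmetric designs `LSSD(v,k,λ;w)` with linking parameters `μ, ν`. -/
def IsLSSD (v w : ℕ) (k lam mu nu : ℝ)
    (B : Fin w → Fin w → Matrix (Fin v) (Fin v) ℝ) : Prop :=
  (∀ i j : Fin w, i ≠ j → ∀ a b : Fin v, B i j a b = 0 ∨ B i j a b = 1) ∧
  (∀ i j : Fin w, i ≠ j → B j i = (B i j)ᵀ) ∧
  (∀ i j : Fin w, i ≠ j →
    B i j * (B i j)ᵀ = (k - lam) • (1 : Matrix (Fin v) (Fin v) ℝ) + lam • J v ∧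
    (B i j)ᵀ * B i j = (k - lam) • (1 : Matrix (Fin v) (Fin v) ℝ) + lam • J v) ∧
  (∀ h i j : Fin w, h ≠ i → h ≠ j → i ≠ j →
    B i h * B h j = nu • J v + (mu - nu) • B i j)

/-- A Hadamard matrix of order `n`: a `±1` matrix with `H * Hᵀ = n • 1`. -/
def IsHadamard (n : ℕ) (H : Matrix (Fin n) (Fin n) ℝ) : Prop :=
  (∀ a b, H a b = 1 ∨ H a b = -1) ∧ H * Hᵀ = (n : ℝ) • (1 : Matrix (Fin n) (Fin n) ℝ)

/-- A regular Hadamard matrix: a Hadamard matrix all of whose row sums are equal. -/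
def IsRegularHadamard (n : ℕ) (H : Matrix (Fin n) (Fin n) ℝ) : Prop :=
  IsHadamard n H ∧ ∃ c : ℝ, ∀ a, ∑ b, H a b = c

/-- Two Hadamard matrices are unbiased if `(1/√n) • (H₁ * H₂ᵀ)` is again Hadamard. -/
def UnbiasedHadamard (n : ℕ) (H₁ H₂ : Matrix (Fin n) (Fin n) ℝ) : Prop :=
  IsHadamard n ((1 / Real.sqrt n) • (H₁ * H₂ᵀ))

open Function

theorem pm_one_mul {x y : ℝ} (hx : x = 1 ∨ x = -1) (hy : y = 1 ∨ y = -1) :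
    x * y = 1 ∨ x * y = -1 := by
  rcases hx with rfl | rfl <;> rcases hy with rfl | rfl <;> norm_num

section MatrixFacts

variable {ι κ ν : Type*} [Fintype ι]

theorem transpose_mul_self_of_mul_transpose_self [DecidableEq ι] {A : Matrix ι ι ℝ} {m : ℝ}
    (hm : m ≠ 0) (h : A * Aᵀ = m • 1) : Aᵀ * A = m • 1 := by
  have h' : (m⁻¹ • Aᵀ) * A = 1 :=
    mul_eq_one_comm.1 (by rw [Matrix.mul_smul, h, smul_smul, inv_mul_cancel₀ hm, one_smul])
  rw [← h', Matrix.smul_mul, smul_smul, mul_inv_cancel₀ hm, one_smul]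

theorem sum_apply_eq_div_of_transpose_mul_self [DecidableEq ι] {A : Matrix ι ι ℝ} {m c : ℝ}
    (hm : m ≠ 0) (hA : Aᵀ * A = m • 1) (hc : ∀ i, ∑ j, A i j = c) (j : ι) :
    ∑ i, A i j = m / c := by
  have key : (∑ i, A i j) * c = m := by
    calc (∑ i, A i j) * c = ∑ i, A i j * ∑ j', A i j' := by simp only [Finset.sum_mul, hc]
      _ = ∑ j', ∑ i, A i j * A i j' := by simp only [Finset.mul_sum]; exact Finset.sum_comm
      _ = ∑ j', (m • (1 : Matrix ι ι ℝ)) j j' := by simp only [← hA, mul_apply, transpose_apply]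
      _ = m := by simp [one_apply]
  refine eq_div_of_mul_eq (fun hc0 => hm ?_) key
  rw [← key, hc0, mul_zero]

theorem sum_mul_transpose_apply [Fintype κ] {A : Matrix ν ι ℝ} {B : Matrix κ ι ℝ} {a b : ℝ}
    (hA : ∀ l, ∑ i, A l i = a) (hB : ∀ i, ∑ k, B k i = b) (l : ν) :
    ∑ k, (A * Bᵀ) l k = a * b := by
  simp only [mul_apply, transpose_apply]
  rw [Finset.sum_comm]
  simp only [← Finset.mul_sum, hB, ← Finset.sum_mul, hA]

theorem mul_transpose_mul_mul_transpose {μ : Type*} [Fintype μ] [DecidableEq ι]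
    {A : Matrix ν ι ℝ} {D : Matrix κ ι ℝ} {C : Matrix μ ι ℝ} {m : ℝ} (hC : Cᵀ * C = m • 1) :
    (A * Cᵀ) * (D * Cᵀ)ᵀ = m • (A * Dᵀ) := by
  rw [transpose_mul, transpose_transpose, Matrix.mul_assoc, ← Matrix.mul_assoc Cᵀ, hC,
    Matrix.smul_mul, Matrix.one_mul, Matrix.mul_smul]

end MatrixFacts

section BlockMatrix

theorem sum_comp_of_bijective {ρ α M : Type*} [Fintype ρ] [Fintype α] [AddCommMonoid M]
    {p q : ρ → α} (hpq : Bijective fun r => (p r, q r)) (f : α → α → M) :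
    ∑ r, f (p r) (q r) = ∑ x, ∑ y, f x y := by
  rw [← Fintype.sum_prod_type']
  exact Fintype.sum_bijective _ hpq _ _ fun _ => rfl

variable {ρ α : Type*} [DecidableEq α]

/-- Row `(x, a)` is, up to the factor `1 / √n`, the vector supported on the block `p⁻¹ {x}`
that carries row `a` of `H` in the coordinates given by `q`. -/
def blockMatrix (H : Matrix α α ℝ) (p q : ρ → α) : Matrix (α × α) ρ ℝ :=
  Matrix.of fun xa r => if p r = xa.1 then H xa.2 (q r) else 0

variable {H : Matrix α α ℝ} {p q p' q' : ρ → α} {m : ℝ}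

theorem blockMatrix_mul_transpose_self [Fintype ρ] [Fintype α]
    (hpq : Bijective fun r => (p r, q r)) (hH : H * Hᵀ = m • 1) :
    blockMatrix H p q * (blockMatrix H p q)ᵀ = m • 1 := by
  ext ⟨x, a⟩ ⟨y, b⟩
  have hab := congrFun (congrFun hH a) b
  simp only [mul_apply, transpose_apply, blockMatrix, of_apply] at hab ⊢
  rw [sum_comp_of_bijective hpq
    (fun u v => (if u = x then H a v else 0) * if u = y then H b v else 0)]
  simp only [mul_ite, ite_mul, zero_mul, mul_zero, Finset.sum_ite_irrel, hab, Matrix.smul_apply,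
    one_apply, smul_eq_mul, mul_one, Finset.sum_const_zero, Finset.sum_ite_eq', Finset.mem_univ,
    ↓reduceIte, Prod.ext_iff]
  simp only [← ite_and, @eq_comm _ y x]

theorem transpose_blockMatrix_mul_self [Fintype α] [DecidableEq ρ]
    (hpq : Bijective fun r => (p r, q r)) (hH : Hᵀ * H = m • 1) :
    (blockMatrix H p q)ᵀ * blockMatrix H p q = m • 1 := by
  ext r s
  have hrs := congrFun (congrFun hH (q r)) (q s)
  simp only [mul_apply, transpose_apply, blockMatrix, of_apply, Fintype.sum_prod_type] at hrs ⊢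
  have hinj : (p r = p s ∧ q r = q s) ↔ r = s :=
    ⟨fun h => hpq.1 (Prod.ext h.1 h.2), by rintro rfl; simp⟩
  simp only [mul_ite, ite_mul, zero_mul, mul_zero, Finset.sum_ite_irrel, hrs, Matrix.smul_apply,
    one_apply, smul_eq_mul, mul_one, Finset.sum_const_zero, Finset.sum_ite_eq, Finset.mem_univ,
    ↓reduceIte]
  simp only [← ite_and, hinj]

theorem blockMatrix_mul_transpose_mul_transpose_self [Fintype ρ] [DecidableEq ρ] [Fintype α]
    (hpq : Bijective fun r => (p r, q r)) (hpq' : Bijective fun r => (p' r, q' r))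
    (hH : H * Hᵀ = m • 1) (hH' : Hᵀ * H = m • 1) :
    (blockMatrix H p q * (blockMatrix H p' q')ᵀ) * (blockMatrix H p q * (blockMatrix H p' q')ᵀ)ᵀ =
      (m * m) • 1 := by
  rw [mul_transpose_mul_mul_transpose (transpose_blockMatrix_mul_self hpq' hH'),
    blockMatrix_mul_transpose_self hpq hH, smul_smul]

theorem blockMatrix_mul_transpose_apply_pm [Fintype ρ] (hpp' : Bijective fun r => (p r, p' r))
    (hH : ∀ a b, H a b = 1 ∨ H a b = -1) (xa yb : α × α) :
    (blockMatrix H p q * (blockMatrix H p' q')ᵀ) xa yb = 1 ∨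
      (blockMatrix H p q * (blockMatrix H p' q')ᵀ) xa yb = -1 := by
  obtain ⟨r, hr, hr_unique⟩ := (bijective_iff_existsUnique _).1 hpp' (xa.1, yb.1)
  simp only [Prod.mk.injEq] at hr hr_unique
  have : (blockMatrix H p q * (blockMatrix H p' q')ᵀ) xa yb = H xa.2 (q r) * H yb.2 (q' r) := by
    simp only [mul_apply, transpose_apply, blockMatrix, of_apply]
    rw [Finset.sum_eq_single r]
    · simp [hr]
    · intro s _ hs
      rcases not_and_or.1 (mt (hr_unique s) hs) with h | h <;> simp [h]
    · simp
  rw [this]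
  exact pm_one_mul (hH _ _) (hH _ _)

theorem sum_blockMatrix_apply [Fintype ρ] [Fintype α] (hpq : Bijective fun r => (p r, q r))
    {c : ℝ} (hc : ∀ a, ∑ b, H a b = c) (xa : α × α) : ∑ r, blockMatrix H p q xa r = c := by
  simp only [blockMatrix, of_apply]
  rw [sum_comp_of_bijective hpq (fun u v => if u = xa.1 then H xa.2 v else 0)]
  simp [Finset.sum_ite_eq', hc]

theorem sum_blockMatrix_apply_left [Fintype α] {c : ℝ} (hc : ∀ b, ∑ a, H a b = c) (r : ρ) :
    ∑ xa, blockMatrix H p q xa r = c := by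
  simp [blockMatrix, Fintype.sum_prod_type, Finset.sum_ite_eq, hc]

end BlockMatrix

section Reindex

variable {ι : Type*} [Fintype ι] [DecidableEq ι] {M : Matrix ι ι ℝ}

theorem isHadamard_submatrix {k : ℕ} (e : Fin k ≃ ι) (hpm : ∀ i j, M i j = 1 ∨ M i j = -1)
    (hM : M * Mᵀ = (k : ℝ) • 1) : IsHadamard k (M.submatrix e e) := by
  refine ⟨fun _ _ => hpm _ _, ?_⟩
  rw [transpose_submatrix, submatrix_mul_equiv, hM, ← submatrix_one_equiv e]
  rfl

theorem isRegularHadamard_submatrix {k : ℕ} (e : Fin k ≃ ι) (hpm : ∀ i j, M i j = 1 ∨ M i j = -1)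
    (hM : M * Mᵀ = (k : ℝ) • 1) {c : ℝ} (hc : ∀ i, ∑ j, M i j = c) :
    IsRegularHadamard k (M.submatrix e e) :=
  ⟨isHadamard_submatrix e hpm hM, c, fun t => (Equiv.sum_comp e (M (e t))).trans (hc (e t))⟩

theorem unbiasedHadamard_submatrix {m : ℕ} (hm : m ≠ 0) (e : Fin (m ^ 2) ≃ ι)
    {M' P : Matrix ι ι ℝ} (hpm : ∀ i j, P i j = 1 ∨ P i j = -1)
    (hP : P * Pᵀ = ((m ^ 2 : ℕ) : ℝ) • 1) (hMM' : M * M'ᵀ = (m : ℝ) • P) :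
    UnbiasedHadamard (m ^ 2) (M.submatrix e e) (M'.submatrix e e) := by
  have hscale : (1 / √((m ^ 2 : ℕ) : ℝ)) • (M.submatrix e e * (M'.submatrix e e)ᵀ) =
      P.submatrix e e := by
    rw [transpose_submatrix, submatrix_mul_equiv, hMM', Nat.cast_pow,
      Real.sqrt_sq (Nat.cast_nonneg m)]
    ext i j
    simp [hm]
  rw [UnbiasedHadamard, hscale]
  exact isHadamard_submatrix e hpm hP

end Reindex

/-- The Beth–Wocjan construction: a regular Hadamard matrix of order `n` and an
orthogonal array with `N` columns on `n` symbols yield `N - 1` pairwise unbiased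
regular Hadamard matrices of order `n²`. -/
theorem stmt_19 (n N : ℕ) (hn : 1 ≤ n) (hN : 2 ≤ N)
    (H : Matrix (Fin n) (Fin n) ℝ) (hH : IsRegularHadamard n H)
    (O : Fin (n ^ 2) → Fin N → Fin n)
    (hO : ∀ i j : Fin N, i ≠ j → ∀ x y : Fin n,
      ∃! r : Fin (n ^ 2), O r i = x ∧ O r j = y) :
    ∃ H' : Fin (N - 1) → Matrix (Fin (n ^ 2)) (Fin (n ^ 2)) ℝ,
      (∀ i, IsRegularHadamard (n ^ 2) (H' i)) ∧
      ∀ i j, i ≠ j → UnbiasedHadamard (n ^ 2) (H' i) (H' j) := by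
  obtain ⟨⟨hpm, hHHt⟩, c, hc⟩ := hH
  have hn0 : (n : ℝ) ≠ 0 := by positivity
  have hHtH := transpose_mul_self_of_mul_transpose_self hn0 hHHt
  have hbij : ∀ i j, i ≠ j → Bijective fun r => (O r i, O r j) := fun i j hij =>
    (bijective_iff_existsUnique _).2 fun xy => by
      simpa only [Prod.ext_iff] using hO i j hij xy.1 xy.2
  have hsq : ((n ^ 2 : ℕ) : ℝ) = n * n := by push_cast; ring
  obtain ⟨N, rfl⟩ : ∃ N', N = N' + 1 := ⟨N - 1, by omega⟩
  rw [Nat.add_sub_cancel]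
  have hlast : Fin.last N ≠ 0 := fun h => by
    rw [Fin.ext_iff, Fin.val_last, Fin.val_zero] at h; omega
  let e : Fin (n ^ 2) ≃ Fin n × Fin n := (finCongr (sq n)).trans finProdFinEquiv.symm
  let B (i j : Fin (N + 1)) := blockMatrix H (O · i) (O · j)
  refine ⟨fun i => (B i.succ 0 * (B 0 (Fin.last N))ᵀ).submatrix e e, fun i => ?_,
    fun i k hik => ?_⟩
  · refine isRegularHadamard_submatrix e
      (blockMatrix_mul_transpose_apply_pm (hbij _ _ i.succ_ne_zero) hpm) ?_
      (sum_mul_transpose_apply (sum_blockMatrix_apply (hbij _ _ i.succ_ne_zero) hc)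
        (sum_blockMatrix_apply_left (sum_apply_eq_div_of_transpose_mul_self hn0 hHtH hc)))
    rw [blockMatrix_mul_transpose_mul_transpose_self (hbij _ _ i.succ_ne_zero)
      (hbij _ _ hlast.symm) hHHt hHtH, hsq]
  · refine unbiasedHadamard_submatrix (by omega) e
      (blockMatrix_mul_transpose_apply_pm (hbij _ _ (Fin.succ_injective _ |>.ne hik)) hpm) ?_
      (mul_transpose_mul_mul_transpose
        (transpose_blockMatrix_mul_self (hbij _ _ hlast.symm) hHtH))
    rw [blockMatrix_mul_transpose_mul_transpose_self (hbij _ _ i.succ_ne_zero)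
      (hbij _ _ k.succ_ne_zero) hHHt hHtH, hsq]
end
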